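/- A binary word x of length n (0 = opening parenthesis, 1 = closing parenthesis) is a Dyck word of depth at most k if and only if the extended word x' = 1^k · x · 0^k contains no substring whose balance has absolute value k+1. -/

import Mathlib

/-- Balance of a binary word: number of 0s (false) minus number of 1s (true). -/
def bal (s : List Bool) : ℤ := (s.count false : ℤ) - (s.count true : ℤ)

/-- The substring x[i..j] (inclusive, 0-indexed). -/
def sub (x : List Bool) (i j : ℕ) : List Bool := (x.drop i).take (j + 1 - i)

/-- x is a Dyck word of depth at most k: every prefix has balance in [0,k] and total balance 0. -/
def DyckBounded (x : List Bool) (k : ℕ) : Prop :=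
  (∀ p, p <+: x → 0 ≤ bal p ∧ bal p ≤ (k : ℤ)) ∧ bal x = 0

/-!
Every infix balance of `w` is a difference of two prefix balances. For `w = 1^k x 0^k` the prefix
balances all lie in `[-k, 0]` when `x` is a Dyck word of depth at most `k`, so no infix reaches
`±(k+1)`. Conversely, if `x` is not such a word then one of `1^k p`, `p` (for a prefix `p` of `x`)
or `x 0^k` is an infix of `w` of balance at least `k+1` in absolute value, and since the balance
moves in unit steps, one of its prefixes has balance exactly `±(k+1)`.
-/

theorem List.IsPrefix.append_cases {α : Type*} {q a b : List α} (h : q <+: a ++ b) :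
    q <+: a ∨ ∃ r, r <+: b ∧ q = a ++ r := by
  obtain ⟨t, ht⟩ := h
  rcases List.append_eq_append_iff.mp ht with ⟨a', rfl, -⟩ | ⟨r, rfl, rfl⟩
  · exact .inl (List.prefix_append _ _)
  · exact .inr ⟨r, List.prefix_append _ _, rfl⟩

@[simp]
theorem bal_nil : bal [] = 0 := rfl

@[simp]
theorem bal_append (a b : List Bool) : bal (a ++ b) = bal a + bal b := by
  simp only [bal, List.count_append]; push_cast; ring

@[simp]
theorem bal_replicate_true (k : ℕ) : bal (List.replicate k true) = -(k : ℤ) := by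
  simp [bal, List.count_replicate]

@[simp]
theorem bal_replicate_false (k : ℕ) : bal (List.replicate k false) = (k : ℤ) := by
  simp [bal, List.count_replicate]

theorem abs_bal_singleton (a : Bool) : |bal [a]| = 1 := by
  cases a <;> rfl

theorem List.Sublist.bal_bounds {q w : List Bool} (h : List.Sublist q w) :
    -(w.count true : ℤ) ≤ bal q ∧ bal q ≤ w.count false := by
  have := h.count_le true
  have := h.count_le false
  unfold bal
  omega

theorem exists_prefix_bal_eq (w : List Bool) {c : ℤ} (h₀ : min 0 (bal w) ≤ c)
    (h₁ : c ≤ max 0 (bal w)) : ∃ p, p <+: w ∧ bal p = c := by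
  induction w using List.reverseRecOn with
  | nil =>
    simp only [bal_nil, min_self, max_self] at h₀ h₁
    exact ⟨[], List.prefix_refl _, by simp only [bal_nil]; omega⟩
  | append_singleton w a ih =>
    by_cases hw : min 0 (bal w) ≤ c ∧ c ≤ max 0 (bal w)
    · obtain ⟨p, hp, rfl⟩ := ih hw.1 hw.2
      exact ⟨p, hp.trans (List.prefix_append _ _), rfl⟩
    · -- a single letter moves the balance by one, so `c` is the balance of the whole word
      refine ⟨w ++ [a], List.prefix_refl _, ?_⟩
      have := abs_bal_singleton a
      rw [bal_append] at h₀ h₁ ⊢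
      rw [abs_eq (by norm_num)] at this
      omega

theorem exists_infix_abs_bal_eq (w : List Bool) {m : ℤ} (h₀ : 0 ≤ m) (h₁ : m ≤ |bal w|) :
    ∃ s, s <:+: w ∧ |bal s| = m := by
  rcases le_total 0 (bal w) with hw | hw
  · rw [abs_of_nonneg hw] at h₁
    obtain ⟨p, hp, hbal⟩ := exists_prefix_bal_eq w (c := m) (by omega) (by omega)
    exact ⟨p, hp.isInfix, by rw [hbal, abs_of_nonneg h₀]⟩
  · rw [abs_of_nonpos hw] at h₁
    obtain ⟨p, hp, hbal⟩ := exists_prefix_bal_eq w (c := -m) (by omega) (by omega)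
    exact ⟨p, hp.isInfix, by rw [hbal, abs_neg, abs_of_nonneg h₀]⟩

theorem abs_bal_infix_le_of_prefix_bounds {w : List Bool} {a b : ℤ}
    (h : ∀ q, q <+: w → a ≤ bal q ∧ bal q ≤ b) {s : List Bool} (hs : s <:+: w) :
    |bal s| ≤ b - a := by
  obtain ⟨t, u, rfl⟩ := hs
  have ht := h t (List.prefix_append_of_prefix (List.prefix_append t s))
  have hts := h (t ++ s) (List.prefix_append _ _)
  rw [bal_append] at hts
  rw [abs_le]
  omega

theorem DyckBounded.bal_bounds_of_prefix_padded {x : List Bool} {k : ℕ} (hx : DyckBounded x k)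
    {q : List Bool} (hq : q <+: List.replicate k true ++ x ++ List.replicate k false) :
    -(k : ℤ) ≤ bal q ∧ bal q ≤ 0 := by
  obtain ⟨hpre, hbal⟩ := hx
  rw [List.append_assoc] at hq
  rcases hq.append_cases with hq | ⟨r, hr, rfl⟩
  · simpa [List.count_replicate] using hq.sublist.bal_bounds
  rcases hr.append_cases with hr | ⟨r', hr', rfl⟩
  · have := hpre r hr
    simp only [bal_append, bal_replicate_true]
    omega
  · have := hr'.sublist.bal_bounds
    simp only [bal_append, bal_replicate_true, hbal]
    simp [List.count_replicate] at this
    omega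

theorem exists_infix_padded_of_not_dyckBounded {x : List Bool} {k : ℕ} (hx : ¬ DyckBounded x k) :
    ∃ s, s <:+: List.replicate k true ++ x ++ List.replicate k false ∧
      (k : ℤ) + 1 ≤ |bal s| := by
  have hleft : ∀ p, p <+: x → List.replicate k true ++ p <:+:
      List.replicate k true ++ x ++ List.replicate k false := fun p hp =>
    (List.prefix_append_of_prefix ((List.prefix_append_right_inj _).mpr hp)).isInfix
  have hmid : ∀ p, p <+: x → p <:+: List.replicate k true ++ x ++ List.replicate k false :=
    fun p hp => hp.isInfix.trans ⟨List.replicate k true, List.replicate k false, rfl⟩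
  simp only [DyckBounded, not_and_or, not_forall, not_le, exists_prop] at hx
  rcases hx with ⟨p, hp, hbad⟩ | hbal
  · rcases hbad with hneg | hbig
    · exact ⟨_, hleft p hp, by rw [bal_append, bal_replicate_true, le_abs]; omega⟩
    · exact ⟨p, hmid p hp, by rw [le_abs]; omega⟩
  · rcases lt_or_gt_of_ne hbal with hneg | hpos
    · exact ⟨_, hleft x (List.prefix_refl x), by
        rw [bal_append, bal_replicate_true, le_abs]; omega⟩
    · refine ⟨x ++ List.replicate k false, ⟨List.replicate k true, [], by simp⟩, ?_⟩
      rw [bal_append, bal_replicate_false, le_abs]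
      omega

theorem dyck_iff_no_large_balance_substring_general (x : List Bool) (k : ℕ) :
    DyckBounded x k ↔
      ¬ ∃ s, s <:+: (List.replicate k true ++ x ++ List.replicate k false) ∧
        |bal s| = (k : ℤ) + 1 := by
  constructor
  · rintro hx ⟨s, hs, habs⟩
    have := abs_bal_infix_le_of_prefix_bounds (fun q hq => hx.bal_bounds_of_prefix_padded hq) hs
    omega
  · intro h
    by_contra hx
    obtain ⟨s, hs, hlarge⟩ := exists_infix_padded_of_not_dyckBounded hx
    obtain ⟨t, ht, habs⟩ := exists_infix_abs_bal_eq s (by positivity) hlarge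
    exact h ⟨t, ht.trans hs, habs⟩

/-- x is a Dyck word of depth at most k iff x' = 1^k x 0^k contains no substring of
balance ±(k+1). -/
theorem dyck_iff_no_large_balance_substring (x : List Bool) (n k : ℕ) (hn : x.length = n) :
    DyckBounded x k ↔
      ¬ ∃ s, s <:+: (List.replicate k true ++ x ++ List.replicate k false) ∧
        |bal s| = (k : ℤ) + 1 :=
  dyck_iff_no_large_balance_substring_general x k
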